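/- arXiv:2210.03423 — 5 statements merged into one kernel-verified Lean document; each statement's English description precedes it below -/
import Mathlib

section
/- For fixed β ≥ 1, the Avalanche expected delay D(γ) = β + (1 + (2+βγ)(1-γ)^β - (1-γ)^{2β}(1+βγ)) / (γ(1-γ)^β(1-(1-γ)^β)) tends to +∞ as γ → 1⁻. -/
/-- The Avalanche expected delay D(γ) tends to +∞ as γ → 1⁻ (within (0,1)). -/
theorem stmt_6 (β : ℕ) (hβ : 1 ≤ β) :
    Filter.Tendsto
      (fun γ : ℝ => (β : ℝ) + (1 + (2 + (β : ℝ) * γ) * (1 - γ) ^ β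
          - (1 - γ) ^ (2 * β) * (1 + (β : ℝ) * γ))
        / (γ * (1 - γ) ^ β * (1 - (1 - γ) ^ β)))
      (nhdsWithin 1 (Set.Ioo (0 : ℝ) 1)) Filter.atTop := by
  have hβ0 : β ≠ 0 := by omega
  apply Filter.tendsto_atTop_add_const_left
  have hnum : Filter.Tendsto
      (fun γ : ℝ => 1 + (2 + (β : ℝ) * γ) * (1 - γ) ^ β
          - (1 - γ) ^ (2 * β) * (1 + (β : ℝ) * γ))
      (nhdsWithin 1 (Set.Ioo (0 : ℝ) 1)) (nhds 1) := by
    have : Filter.Tendsto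
        (fun γ : ℝ => 1 + (2 + (β : ℝ) * γ) * (1 - γ) ^ β
            - (1 - γ) ^ (2 * β) * (1 + (β : ℝ) * γ)) (nhds 1) (nhds 1) := by
      have hc : Continuous fun γ : ℝ => 1 + (2 + (β : ℝ) * γ) * (1 - γ) ^ β
          - (1 - γ) ^ (2 * β) * (1 + (β : ℝ) * γ) := by continuity
      have := hc.tendsto 1
      simpa [hβ0, zero_pow, sub_self] using this
    exact this.mono_left nhdsWithin_le_nhds
  have hden : Filter.Tendsto
      (fun γ : ℝ => γ * (1 - γ) ^ β * (1 - (1 - γ) ^ β))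
      (nhdsWithin 1 (Set.Ioo (0 : ℝ) 1)) (nhdsWithin 0 (Set.Ioi 0)) := by
    apply tendsto_nhdsWithin_of_tendsto_nhds_of_eventually_within
    · have hc : Continuous fun γ : ℝ => γ * (1 - γ) ^ β * (1 - (1 - γ) ^ β) := by
        continuity
      have := hc.tendsto 1
      have h2 := this.mono_left (nhdsWithin_le_nhds
        (s := Set.Ioo (0 : ℝ) 1))
      simpa [hβ0, zero_pow, sub_self] using h2
    · filter_upwards [self_mem_nhdsWithin] with γ hγ
      obtain ⟨h0, h1⟩ := hγ
      have h1γ : 0 < 1 - γ := by linarith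
      have hlt : (1 - γ) ^ β < 1 := by
        apply pow_lt_one₀ (by linarith) (by linarith) hβ0
      have : 0 < γ * (1 - γ) ^ β * (1 - (1 - γ) ^ β) := by
        apply mul_pos (mul_pos h0 (pow_pos h1γ β)) (by linarith)
      exact this
  have hinv : Filter.Tendsto
      (fun γ : ℝ => (γ * (1 - γ) ^ β * (1 - (1 - γ) ^ β))⁻¹)
      (nhdsWithin 1 (Set.Ioo (0 : ℝ) 1)) Filter.atTop :=
    tendsto_inv_nhdsGT_zero.comp hden
  simpa [div_eq_mul_inv] using hnum.pos_mul_atTop one_pos hinv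
end

section
/- For fixed γ ∈ (0,1), the Avalanche expected delay, as a function of the threshold β, grows at least proportionally to (1-γ)^{-β}; concretely, D(β) = β + (1 + (2+βγ)(1-γ)^β - (1-γ)^{2β}(1+βγ)) / (γ(1-γ)^β(1-(1-γ)^β)) satisfies D(β) ≥ (1-γ)^{-β} · c for some constant c > 0 depending only on γ, for all sufficiently large β. -/
/-! With `x = (1 - γ)^β ∈ (0, 1)` the numerator of the fraction in `D(β)` equals
`1 + x (2 - x) + β γ x (1 - x)`, which is at least `1 - x`; dividing by `γ x (1 - x)` gives
`D(β) ≥ (γ x)⁻¹`, so `c = γ⁻¹` works for every `β ≥ 1`. -/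

lemma inv_mul_le_delay_fraction {γ x t : ℝ} (hγ : 0 < γ) (hx₀ : 0 < x) (hx₁ : x < 1)
    (ht : 0 ≤ t) :
    (γ * x)⁻¹ ≤ (1 + (2 + t) * x - x ^ 2 * (1 + t)) / (γ * x * (1 - x)) := by
  have hγx : 0 < γ * x := mul_pos hγ hx₀
  rw [le_div_iff₀ (mul_pos hγx (sub_pos.mpr hx₁)), ← mul_assoc, inv_mul_cancel₀ hγx.ne',
    one_mul]
  have hnum : 1 + (2 + t) * x - x ^ 2 * (1 + t) = 1 + x * (2 - x) + t * x * (1 - x) := by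
    ring
  rw [hnum]
  have h₁ : 0 ≤ 1 - x := by linarith
  have h₂ : 0 ≤ 2 - x := by linarith
  have : 0 ≤ x * (2 - x) + t * x * (1 - x) := by positivity
  linarith

/-- For fixed γ ∈ (0,1), the Avalanche expected delay grows at least like (1-γ)^{-β}:
there is a constant c > 0 such that D(β) ≥ (1-γ)^{-β} · c for all sufficiently large β. -/
theorem stmt_7 (γ : ℝ) (hγ : γ ∈ Set.Ioo (0 : ℝ) 1) :
    ∃ c > (0 : ℝ), ∃ N : ℕ, ∀ β : ℕ, N ≤ β → 1 ≤ β →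
      (β : ℝ) + (1 + (2 + (β : ℝ) * γ) * (1 - γ) ^ β
          - (1 - γ) ^ (2 * β) * (1 + (β : ℝ) * γ))
        / (γ * (1 - γ) ^ β * (1 - (1 - γ) ^ β))
      ≥ ((1 - γ) ^ β)⁻¹ * c := by
  obtain ⟨hγ₀, hγ₁⟩ := hγ
  refine ⟨γ⁻¹, inv_pos.mpr hγ₀, 0, fun β _ hβ => ?_⟩
  have hx₀ : 0 < (1 - γ) ^ β := pow_pos (by linarith) β
  have hx₁ : (1 - γ) ^ β < 1 := pow_lt_one₀ (by linarith) (by linarith) (by omega)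
  rw [pow_mul']
  calc ((1 - γ) ^ β)⁻¹ * γ⁻¹ = (γ * (1 - γ) ^ β)⁻¹ := by rw [mul_inv, mul_comm]
    _ ≤ _ := inv_mul_le_delay_fraction hγ₀ hx₀ hx₁ (by positivity)
    _ ≤ _ := le_add_of_nonneg_left (Nat.cast_nonneg β)
end

section
/- For all γ ∈ (0,1) and all integers β ≥ 2, the Glacier expected delay β/(1-γ) is strictly less than the Avalanche expected delay β + (1 + (2+βγ)(1-γ)^β - (1-γ)^{2β}(1+βγ)) / (γ(1-γ)^β(1-(1-γ)^β)). -/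
/-! Write `q = 1 - γ` and `P = q ^ β`. After clearing denominators the claim reads
`β γ P (1 - P) (γ - q) < q (1 + 2P - P²)`. For `γ ≤ 1/2` the left side is not positive; for
`γ > 1/2` we have `q < 1/2`, so `β q ^ (β - 1) ≤ β / 2 ^ (β - 1) ≤ 1`, i.e. `β P ≤ q`, and the
remaining factors on the left are less than `1`. -/

lemma Nat.cast_mul_pow_le_self_of_le_half {q : ℝ} (hq0 : 0 ≤ q) (hq : q ≤ 1 / 2) (n : ℕ) :
    (n : ℝ) * q ^ n ≤ q := by
  cases n with
  | zero => simpa using hq0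
  | succ m =>
    have hm : ((m + 1 : ℕ) : ℝ) ≤ 2 ^ m := by exact_mod_cast Nat.lt_two_pow_self
    have hpow : q ^ m ≤ (1 / 2) ^ m := pow_le_pow_left₀ hq0 hq m
    calc ((m + 1 : ℕ) : ℝ) * q ^ (m + 1) = q * (((m + 1 : ℕ) : ℝ) * q ^ m) := by ring
      _ ≤ q * (2 ^ m * (1 / 2) ^ m) := by gcongr
      _ = q := by rw [← mul_pow]; norm_num

lemma one_sub_two_mul_mul_nat_mul_pow_le {q : ℝ} (hq0 : 0 ≤ q) (n : ℕ) :
    (1 - 2 * q) * n * q ^ n ≤ q := by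
  have hnq : 0 ≤ (n : ℝ) * q ^ n := by positivity
  rcases le_or_gt q (1 / 2) with hq | hq
  · calc (1 - 2 * q) * n * q ^ n ≤ 1 * (n * q ^ n) := by rw [mul_assoc]; gcongr; linarith
      _ ≤ q := by rw [one_mul]; exact Nat.cast_mul_pow_le_self_of_le_half hq0 hq n
  · nlinarith

lemma div_one_sub_lt_add_div {γ P b : ℝ} (hγ0 : 0 < γ) (hγ1 : γ < 1) (hP0 : 0 < P) (hP1 : P < 1)
    (hb : (2 * γ - 1) * b * P ≤ 1 - γ) :
    b / (1 - γ) < b + (1 + (2 + b * γ) * P - P ^ 2 * (1 + b * γ)) / (γ * P * (1 - P)) := by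
  have hq : 0 < 1 - γ := by linarith
  have hD : 0 < γ * P * (1 - P) := by have := sub_pos.2 hP1; positivity
  have hlhs : b / (1 - γ) - b = b * γ / (1 - γ) := by field_simp; ring
  rw [← sub_lt_iff_lt_add', hlhs, div_lt_div_iff₀ hq hD]
  have hfactor : γ * (1 - P) * ((2 * γ - 1) * b * P) ≤ γ * (1 - P) * (1 - γ) := by
    have := sub_pos.2 hP1
    gcongr
  nlinarith [mul_pos hq hP0, mul_pos (mul_pos hq hP0) (sub_pos.2 hP1), mul_pos hq hγ0]

/-- For all γ ∈ (0,1) and integers β ≥ 2, the Glacier expected delay β/(1-γ) is strictly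
less than the Avalanche expected delay. -/
theorem stmt_8 (γ : ℝ) (hγ : γ ∈ Set.Ioo (0 : ℝ) 1) (β : ℕ) (hβ : 2 ≤ β) :
    (β : ℝ) / (1 - γ)
      < (β : ℝ) + (1 + (2 + (β : ℝ) * γ) * (1 - γ) ^ β
          - (1 - γ) ^ (2 * β) * (1 + (β : ℝ) * γ))
        / (γ * (1 - γ) ^ β * (1 - (1 - γ) ^ β)) := by
  obtain ⟨hγ0, hγ1⟩ := hγ
  have hq : 0 < 1 - γ := by linarith
  have hb := one_sub_two_mul_mul_nat_mul_pow_le hq.le β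
  rw [pow_mul']
  refine div_one_sub_lt_add_div hγ0 hγ1 (pow_pos hq β) (pow_lt_one₀ hq.le (by linarith) (by omega)) ?_
  linarith
end

section
/- Suppose two payload transactions tx and tx' are related, i.e., tx consumes an output of tx' or vice versa. If a protocol only delivers a payload when all payloads creating its inputs have already been delivered, then any two parties that deliver both tx and tx' deliver them in the same order. -/
/-- If a protocol only delivers a payload after all payloads creating its inputs have been
delivered, then any two parties delivering two related payloads (one spends an output of
the other) deliver them in the same order. Delivery sequences are modeled as lists, where
`L.indexOf a < L.indexOf b` means `a` is delivered before `b`. -/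
theorem stmt_15 {P : Type} [DecidableEq P] (spends : P → P → Prop)
    (L₁ L₂ : List P)
    (h₁ : ∀ a b, spends a b → a ∈ L₁ → b ∈ L₁ ∧ L₁.idxOf b < L₁.idxOf a)
    (h₂ : ∀ a b, spends a b → a ∈ L₂ → b ∈ L₂ ∧ L₂.idxOf b < L₂.idxOf a)
    (tx tx' : P) (hrel : spends tx tx' ∨ spends tx' tx)
    (htx1 : tx ∈ L₁) (htx'1 : tx' ∈ L₁) (htx2 : tx ∈ L₂) (htx'2 : tx' ∈ L₂) :
    (L₁.idxOf tx < L₁.idxOf tx' ↔ L₂.idxOf tx < L₂.idxOf tx') := by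
  rcases hrel with h | h
  · have a1 := (h₁ tx tx' h htx1).2
    have a2 := (h₂ tx tx' h htx2).2
    constructor <;> intro hh <;> omega
  · have a1 := (h₁ tx' tx h htx'1).2
    have a2 := (h₂ tx' tx h htx'2).2
    constructor <;> intro hh <;> omega
end

section
/- For γ ∈ (0,1) and β ≥ 1, the ratio of Avalanche's expected confirmation delay to Glacier's expected confirmation delay, namely [(1-(1-γ)^β)/(γ(1-γ)^β)] / [β/(1-γ)], tends to +∞ as β → ∞. -/
open Filter Topology

lemma tendsto_inv_natCast_mul_pow_atTop {q : ℝ} (hq0 : 0 < q) (hq1 : q < 1) :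
    Tendsto (fun n : ℕ => ((n : ℝ) * q ^ n)⁻¹) atTop atTop := by
  refine Tendsto.inv_tendsto_nhdsGT_zero <|
    tendsto_nhdsWithin_of_tendsto_nhds_of_eventually_within _
      (tendsto_self_mul_const_pow_of_lt_one hq0.le hq1) ?_
  filter_upwards [eventually_ge_atTop 1] with n hn
  have hn0 : (0 : ℝ) < n := by exact_mod_cast hn
  exact mul_pos hn0 (pow_pos hq0 n)

/-- The ratio of Avalanche's expected confirmation delay (1-(1-γ)^β)/(γ(1-γ)^β) to
Glacier's expected confirmation delay β/(1-γ) tends to +∞ as β → ∞. -/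
theorem stmt_19 (γ : ℝ) (hγ : γ ∈ Set.Ioo (0 : ℝ) 1) :
    Filter.Tendsto
      (fun β : ℕ => ((1 - (1 - γ) ^ β) / (γ * (1 - γ) ^ β)) / ((β : ℝ) / (1 - γ)))
      Filter.atTop Filter.atTop := by
  obtain ⟨hγ0, hγ1⟩ := hγ
  have hq0 : 0 < 1 - γ := by linarith
  have hq1 : 1 - γ < 1 := by linarith
  -- The ratio is `(1 - γ) / γ * (1 - q ^ β) * (β * q ^ β)⁻¹` with `q = 1 - γ`.
  have hfactor : Tendsto (fun β : ℕ => (1 - γ) / γ * (1 - (1 - γ) ^ β)) atTop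
      (𝓝 ((1 - γ) / γ)) := by
    simpa using ((tendsto_pow_atTop_nhds_zero_of_lt_one hq0.le hq1).const_sub 1).const_mul
      ((1 - γ) / γ)
  refine (hfactor.pos_mul_atTop (by positivity)
    (tendsto_inv_natCast_mul_pow_atTop hq0 hq1)).congr' ?_
  filter_upwards [eventually_ge_atTop 1] with β hβ
  have hβ0 : (0 : ℝ) < β := by exact_mod_cast hβ
  have hpow : 0 < (1 - γ) ^ β := pow_pos hq0 β
  field_simp
end
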